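/- Let f ∈ C³(ℝ,ℝ) satisfy hypotheses (H1)–(H3) with f''(0) > 0. Let z : ℝ → ℝ be an entire solution of x'(t) = f(x(t−1)), and let m < 0 < M be such that m ≤ z(t) ≤ M for all t ∈ ℝ and z(1) = m (so z attains its minimum at t = 1). Then m > D(M) and m > r(−r(M)/2), where r and D are defined from f as in the context. -/

import Mathlib

open Real Set

/-- Schwarzian derivative of `f` at `x`. -/
noncomputable def Schwarzian (f : ℝ → ℝ) (x : ℝ) : ℝ :=
  iteratedDeriv 3 f x / deriv f x - (3 / 2) * (iteratedDeriv 2 f x / deriv f x) ^ 2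

/-- Hypotheses (H1)-(H3): `f ∈ C³`, negative feedback with `f'(0) < 0`,
boundedness below, at most one critical point which is a local extremum,
and negative Schwarzian wherever `f' ≠ 0`. -/
def HypH (f : ℝ → ℝ) : Prop :=
  ContDiff ℝ 3 f ∧
  (∀ x : ℝ, x ≠ 0 → x * f x < 0) ∧
  deriv f 0 < 0 ∧
  (∃ C : ℝ, ∀ x : ℝ, C ≤ f x) ∧
  (∀ u v : ℝ, deriv f u = 0 → deriv f v = 0 → u = v) ∧
  (∀ u : ℝ, deriv f u = 0 → IsLocalExtr f u) ∧
  (∀ u : ℝ, deriv f u ≠ 0 → Schwarzian f u < 0)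

/-- The rational comparison function `r(x; a, b) = a²x/(a - bx)`. -/
noncomputable def rfun (a b : ℝ) (x : ℝ) : ℝ := a ^ 2 * x / (a - b * x)

/-- `A(x) = x + r(x) + (1/r(x)) ∫_x^0 r(t) dt`, with `A(0) = 0`. -/
noncomputable def Afun (a b : ℝ) (x : ℝ) : ℝ :=
  if x = 0 then 0 else x + rfun a b x + (1 / rfun a b x) * ∫ t in x..0, rfun a b t

/-- `B(x) = (1/r(x)) ∫_{-r(x)}^0 r(s) ds`, with `B(0) = 0`. -/
noncomputable def Bfun (a b : ℝ) (x : ℝ) : ℝ :=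
  if x = 0 then 0 else (1 / rfun a b x) * ∫ s in (-(rfun a b x))..0, rfun a b s

/-- `D(x) = A(x)` if `r(x) < -x`, and `D(x) = B(x)` otherwise. -/
noncomputable def Dfun (a b : ℝ) (x : ℝ) : ℝ :=
  if rfun a b x < -x then Afun a b x else Bfun a b x

/-! The comparison function `r` is the function with `r 0 = 0`, `r' 0 = f' 0`, `r'' 0 = f'' 0`
and vanishing Schwarzian: `(-r')^(-1/2)` is affine. Since `Sf < 0`, `(-f')^(-1/2)` is strictly
convex as long as `f' < 0`, so it lies above its tangent at `0`; this gives `r' < f'` and hence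
`r < f` on that interval. Past the critical point of `f`, which has to be a local minimum, `f`
increases while `r` decreases, so `r ≤ f` on all of `(0, ∞)`.

Consequently `f ≥ r M = -q` on `(-∞, M]`, and since `z 0 = 0` (as `z' 1 = 0`),
`z (-τ) ≤ min M (τ q)` for `τ ∈ [0, 1]`. Therefore
`m = z 1 - z 0 = ∫₀¹ f (z (-τ)) dτ > ∫₀¹ r (min M (τ q)) dτ`, strictly because `r < f` near `0`.
The last integral is `D M` (the branch `r M < -M` of `D` is `M < q`), and by convexity of `r` it
is at least `r (q / 2)`. -/

open Filter Topology MeasureTheory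

lemma hasDerivAt_iteratedDeriv {f : ℝ → ℝ} {n k : ℕ} (hf : ContDiff ℝ n f) (hk : k < n)
    (x : ℝ) : HasDerivAt (iteratedDeriv k f) (iteratedDeriv (k + 1) f x) x := by
  rw [iteratedDeriv_succ]
  exact (hf.differentiable_iteratedDeriv k (by exact_mod_cast hk) x).hasDerivAt

lemma lt_of_hasDerivAt_pos {g g' : ℝ → ℝ} {c x : ℝ} (hcx : c < x)
    (hg : ∀ y ∈ Icc c x, HasDerivAt g (g' y) y) (hpos : ∀ y ∈ Ioo c x, 0 < g' y) :
    g c < g x := by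
  refine strictMonoOn_of_hasDerivWithinAt_pos (convex_Icc c x)
    (fun y hy => (hg y hy).continuousAt.continuousWithinAt) (fun y hy => ?_)
    (by rwa [interior_Icc]) (left_mem_Icc.2 hcx.le) (right_mem_Icc.2 hcx.le) hcx
  rw [interior_Icc] at hy ⊢
  exact (hg y (Ioo_subset_Icc_self hy)).hasDerivWithinAt

lemma tangent_lt_of_hasDerivAt2_pos {u u' u'' : ℝ → ℝ} {c x : ℝ} (hcx : c < x)
    (hu : ∀ y ∈ Icc c x, HasDerivAt u (u' y) y) (hu' : ∀ y ∈ Icc c x, HasDerivAt u' (u'' y) y)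
    (hpos : ∀ y ∈ Ioo c x, 0 < u'' y) :
    u c + u' c * (x - c) < u x := by
  have hmono : ∀ y ∈ Ioo c x, u' c < u' y := fun y hy =>
    lt_of_hasDerivAt_pos hy.1 (fun t ht => hu' t ⟨ht.1, ht.2.trans hy.2.le⟩)
      (fun t ht => hpos t ⟨ht.1, ht.2.trans hy.2⟩)
  have key := lt_of_hasDerivAt_pos (g := fun y => u y - u' c * y) hcx
    (fun y hy => (hu y hy).sub ((hasDerivAt_id y).const_mul (u' c)))
    (fun y hy => by simpa using hmono y hy)
  linarith

lemma IsPreconnected.forall_neg_of_ne_zero {s : Set ℝ} {g : ℝ → ℝ} (hs : IsPreconnected s)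
    (hg : ContinuousOn g s) (hne : ∀ x ∈ s, g x ≠ 0) {x₁ : ℝ} (hx₁ : x₁ ∈ s) (hneg : g x₁ < 0) :
    ∀ x ∈ s, g x < 0 := by
  intro x hx
  by_contra! hnonneg
  obtain ⟨y, hy, hy0⟩ := hs.intermediate_value hx₁ hx hg ⟨hneg.le, hnonneg⟩
  exact hne y hy hy0

lemma StrictAntiOn.not_isLocalExtr {f : ℝ → ℝ} {s : Set ℝ} {c : ℝ} (hf : StrictAntiOn f s)
    (hs : s ∈ 𝓝 c) : ¬IsLocalExtr f c := by
  have hc : c ∈ s := mem_of_mem_nhds hs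
  rintro (hmin | hmax)
  · obtain ⟨y, ⟨hfy, hy⟩, hcy⟩ :=
      (((hmin.and hs).filter_mono nhdsWithin_le_nhds).and (self_mem_nhdsWithin (s := Ioi c))).exists
    exact (hf hc hy hcy).not_ge hfy
  · obtain ⟨y, ⟨hfy, hy⟩, hyc⟩ :=
      (((hmax.and hs).filter_mono nhdsWithin_le_nhds).and (self_mem_nhdsWithin (s := Iio c))).exists
    exact (hf hy hc hyc).not_ge hfy

lemma map_zero_of_mul_neg {f : ℝ → ℝ} (hf : Continuous f) (h : ∀ x ≠ 0, x * f x < 0) :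
    f 0 = 0 := by
  have hright : ∀ᶠ x in 𝓝[>] (0 : ℝ), f x ≤ 0 := by
    filter_upwards [self_mem_nhdsWithin] with x (hx : 0 < x)
    exact (neg_of_mul_neg_right (h x hx.ne') hx.le).le
  have hleft : ∀ᶠ x in 𝓝[<] (0 : ℝ), 0 ≤ f x := by
    filter_upwards [self_mem_nhdsWithin] with x (hx : x < 0)
    exact (pos_of_mul_neg_right (h x hx.ne) hx.le).le
  exact le_antisymm (le_of_tendsto (hf.continuousWithinAt.tendsto) hright)
    (ge_of_tendsto (hf.continuousWithinAt.tendsto) hleft)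

lemma nonneg_of_mul_neg {f : ℝ → ℝ} (hf : Continuous f) (h : ∀ x ≠ 0, x * f x < 0) {x : ℝ}
    (hx : x ≤ 0) : 0 ≤ f x := by
  rcases hx.eq_or_lt with rfl | hx
  · exact (map_zero_of_mul_neg hf h).ge
  · exact (pos_of_mul_neg_right (h x hx.ne) hx.le).le

lemma ConvexOn.mul_midpoint_le_integral {g : ℝ → ℝ} {a b : ℝ} (hab : a ≤ b)
    (hg : ConvexOn ℝ (Icc a b) g) (hc : ContinuousOn g (Icc a b)) :
    (b - a) * g ((a + b) / 2) ≤ ∫ t in a..b, g t := by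
  have hint : IntervalIntegrable g volume a b := hc.intervalIntegrable_of_Icc hab
  have hrefl : ∫ t in a..b, g (a + b - t) = ∫ t in a..b, g t := by
    rw [intervalIntegral.integral_comp_sub_left, add_sub_cancel_right, add_sub_cancel_left]
  have hmid : ∀ t ∈ Icc a b, 2 * g ((a + b) / 2) ≤ g t + g (a + b - t) := fun t ht => by
    have hs : a + b - t ∈ Icc a b := ⟨by linarith [ht.2], by linarith [ht.1]⟩
    have := hg.2 ht hs (by norm_num : (0 : ℝ) ≤ 1 / 2) (by norm_num : (0 : ℝ) ≤ 1 / 2)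
      (by norm_num)
    simp only [smul_eq_mul] at this
    rw [show 1 / 2 * t + 1 / 2 * (a + b - t) = (a + b) / 2 by ring] at this
    linarith
  have hint' : IntervalIntegrable (fun t => g (a + b - t)) volume a b := by
    simpa using (hint.comp_sub_left (a + b)).symm
  have := intervalIntegral.integral_mono_on hab intervalIntegrable_const (hint.add hint') hmid
  rw [intervalIntegral.integral_const, intervalIntegral.integral_add hint hint', hrefl,
    smul_eq_mul] at this
  linarith

lemma integral_comp_min_of_le {φ : ℝ → ℝ} {a b c : ℝ} (hac : a ≤ c) (hcb : c ≤ b)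
    (hφ : ContinuousOn φ (Icc a c)) :
    ∫ t in a..b, φ (min c t) = (∫ t in a..c, φ t) + (b - c) * φ c := by
  have hcont : ContinuousOn (fun t => φ (min c t)) (Icc a b) :=
    hφ.comp (by fun_prop) fun t ht => ⟨le_min hac ht.1, min_le_left _ _⟩
  rw [← intervalIntegral.integral_add_adjacent_intervals (b := c)
      ((hcont.mono (Icc_subset_Icc_right hcb)).intervalIntegrable_of_Icc hac)
      ((hcont.mono (Icc_subset_Icc_left hac)).intervalIntegrable_of_Icc hcb),
    intervalIntegral.integral_congr (g := φ) fun t ht => by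
      rw [uIcc_of_le hac] at ht; rw [min_eq_right ht.2],
    intervalIntegral.integral_congr (a := c) (g := fun _ => φ c) fun t ht => by
      rw [uIcc_of_le hcb] at ht; rw [min_eq_left ht.1],
    intervalIntegral.integral_const, smul_eq_mul]

section rfun

variable {a b : ℝ}

@[simp] lemma rfun_zero : rfun a b 0 = 0 := by simp [rfun]

lemma rfun_denom_neg (ha : a < 0) (hb : 0 < b) {x : ℝ} (hx : 0 ≤ x) : a - b * x < 0 := by
  nlinarith

lemma hasDerivAt_rfun {x : ℝ} (hx : a - b * x ≠ 0) :
    HasDerivAt (rfun a b) (a ^ 3 / (a - b * x) ^ 2) x := by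
  have hnum : HasDerivAt (fun y => a ^ 2 * y) (a ^ 2) x := by
    simpa using (hasDerivAt_id x).const_mul (a ^ 2)
  have hden : HasDerivAt (fun y => a - b * y) (-b) x := by
    simpa using ((hasDerivAt_id x).const_mul b).const_sub a
  refine (hnum.fun_div hden hx).congr_deriv ?_
  field_simp
  ring

lemma continuousOn_rfun (ha : a < 0) (hb : 0 < b) : ContinuousOn (rfun a b) (Ici 0) :=
  fun _ hx => (hasDerivAt_rfun (rfun_denom_neg ha hb hx).ne).continuousAt.continuousWithinAt

lemma strictAntiOn_rfun (ha : a < 0) (hb : 0 < b) : StrictAntiOn (rfun a b) (Ici 0) := by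
  refine strictAntiOn_of_deriv_neg (convex_Ici 0) (continuousOn_rfun ha hb) fun x hx => ?_
  rw [interior_Ici] at hx
  have hden := rfun_denom_neg ha hb hx.le
  rw [(hasDerivAt_rfun hden.ne).deriv]
  exact div_neg_of_neg_of_pos (Odd.pow_neg (by decide) ha) (pow_two_pos_of_ne_zero hden.ne)

lemma rfun_neg (ha : a < 0) (hb : 0 < b) {x : ℝ} (hx : 0 < x) : rfun a b x < 0 := by
  simpa using strictAntiOn_rfun ha hb self_mem_Ici hx.le hx

lemma rfun_nonpos (ha : a < 0) (hb : 0 < b) {x : ℝ} (hx : 0 ≤ x) : rfun a b x ≤ 0 := by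
  simpa using (strictAntiOn_rfun ha hb).antitoneOn self_mem_Ici hx hx

lemma convexOn_rfun (ha : a < 0) (hb : 0 < b) : ConvexOn ℝ (Ici 0) (rfun a b) := by
  have hderiv : ∀ x ∈ interior (Ici (0 : ℝ)), HasDerivAt (rfun a b) (a ^ 3 / (a - b * x) ^ 2) x :=
    fun x hx => hasDerivAt_rfun (rfun_denom_neg ha hb (interior_subset hx)).ne
  refine MonotoneOn.convexOn_of_deriv (convex_Ici 0) (continuousOn_rfun ha hb)
    (fun x hx => (hderiv x hx).differentiableAt.differentiableWithinAt) fun x hx y hy hxy => ?_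
  rw [(hderiv x hx).deriv, (hderiv y hy).deriv]
  rw [interior_Ici] at hx hy
  have hx' := rfun_denom_neg ha hb hx.le
  have key : (-a) ^ 3 / (a - b * y) ^ 2 ≤ (-a) ^ 3 / (a - b * x) ^ 2 :=
    div_le_div_of_nonneg_left (pow_nonneg (neg_nonneg.2 ha.le) 3)
      (pow_two_pos_of_ne_zero hx'.ne) (by nlinarith [mul_le_mul_of_nonneg_left hxy hb.le])
  rw [Odd.neg_pow (by decide), neg_div, neg_div] at key
  linarith

lemma mul_rfun_half_le_integral (ha : a < 0) (hb : 0 < b) {q : ℝ} (hq : 0 ≤ q) :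
    q * rfun a b (q / 2) ≤ ∫ t in (0 : ℝ)..q, rfun a b t := by
  have h := ConvexOn.mul_midpoint_le_integral hq
    ((convexOn_rfun ha hb).subset Icc_subset_Ici_self (convex_Icc 0 q))
    ((continuousOn_rfun ha hb).mono Icc_subset_Ici_self)
  simpa using h

lemma Dfun_eq_integral (ha : a < 0) (hb : 0 < b) {M : ℝ} (hM : 0 < M) :
    Dfun a b M = ∫ τ in (0 : ℝ)..1, rfun a b (min M (τ * -rfun a b M)) := by
  set q := -rfun a b M with hq_def
  have hq : 0 < q := neg_pos.2 (rfun_neg ha hb hM)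
  have hrM : rfun a b M = -q := by rw [hq_def, neg_neg]
  clear_value q
  rw [intervalIntegral.integral_comp_mul_right (fun t => rfun a b (min M t)) hq.ne', zero_mul,
    one_mul, smul_eq_mul]
  rcases lt_or_ge M q with hMq | hqM
  · rw [integral_comp_min_of_le hM.le hMq.le ((continuousOn_rfun ha hb).mono Icc_subset_Ici_self),
      Dfun, if_pos (by linarith), Afun, if_neg hM.ne', intervalIntegral.integral_symm, hrM]
    field_simp
    ring
  · rw [intervalIntegral.integral_congr (a := 0) (b := q) (g := rfun a b) fun t ht => ?_]
    · rw [Dfun, if_neg (by linarith), Bfun, if_neg hM.ne', hrM, neg_neg,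
        intervalIntegral.integral_symm]
      field_simp
    · rw [uIcc_of_le hq.le] at ht
      rw [min_eq_right (ht.2.trans hqM)]

lemma rfun_half_le_integral (ha : a < 0) (hb : 0 < b) {M q : ℝ} (hM : 0 ≤ M) (hq : 0 < q) :
    rfun a b (q / 2) ≤ ∫ τ in (0 : ℝ)..1, rfun a b (min M (τ * q)) := by
  have hτq : ∀ τ ∈ Icc (0 : ℝ) 1, 0 ≤ τ * q := fun τ hτ => mul_nonneg hτ.1 hq.le
  calc rfun a b (q / 2) ≤ q⁻¹ * ∫ t in (0 : ℝ)..q, rfun a b t := by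
        rw [le_inv_mul_iff₀ hq]; exact mul_rfun_half_le_integral ha hb hq.le
    _ = ∫ τ in (0 : ℝ)..1, rfun a b (τ * q) := by
        rw [intervalIntegral.integral_comp_mul_right _ hq.ne', smul_eq_mul, zero_mul, one_mul]
    _ ≤ ∫ τ in (0 : ℝ)..1, rfun a b (min M (τ * q)) :=
        intervalIntegral.integral_mono_on zero_le_one
          (((continuousOn_rfun ha hb).comp (by fun_prop) hτq).intervalIntegrable_of_Icc zero_le_one)
          (((continuousOn_rfun ha hb).comp (by fun_prop) fun τ hτ =>
            le_min hM (hτq τ hτ)).intervalIntegrable_of_Icc zero_le_one)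
          fun τ hτ => (strictAntiOn_rfun ha hb).antitoneOn (le_min hM (hτq τ hτ)) (hτq τ hτ)
            (min_le_right _ _)

end rfun

lemma two_mul_deriv_mul_lt_of_schwarzian_neg {f : ℝ → ℝ} {x : ℝ} (hf' : deriv f x ≠ 0)
    (hS : Schwarzian f x < 0) :
    2 * deriv f x * iteratedDeriv 3 f x < 3 * iteratedDeriv 2 f x ^ 2 := by
  have hsq : 0 < deriv f x ^ 2 := pow_two_pos_of_ne_zero hf'
  have hS' : Schwarzian f x * deriv f x ^ 2
      = deriv f x * iteratedDeriv 3 f x - 3 / 2 * iteratedDeriv 2 f x ^ 2 := by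
    rw [Schwarzian]; field_simp
  nlinarith [mul_neg_of_neg_of_pos hS hsq]

lemma hasDerivAt_inv_sqrt {φ : ℝ → ℝ} {φ' x : ℝ} (hφ : HasDerivAt φ φ' x) (hx : 0 < φ x) :
    HasDerivAt (fun y => (√(φ y))⁻¹) (-φ' / (2 * √(φ x) * φ x)) x := by
  have hs := ((Real.hasDerivAt_sqrt hx.ne').comp x hφ).inv (Real.sqrt_pos.2 hx).ne'
  refine hs.congr_deriv ?_
  have hsq := Real.sq_sqrt hx.le
  have hne := (Real.sqrt_pos.2 hx).ne'
  simp only [Function.comp_apply]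
  field_simp
  rw [hsq, mul_comm]

lemma hasDerivAt_deriv_inv_sqrt {φ φ' : ℝ → ℝ} {φ'' x : ℝ} (hφ : HasDerivAt φ (φ' x) x)
    (hφ' : HasDerivAt φ' φ'' x) (hx : 0 < φ x) :
    HasDerivAt (fun y => -φ' y / (2 * √(φ y) * φ y))
      ((3 * φ' x ^ 2 - 2 * φ x * φ'') / (4 * √(φ x) * φ x ^ 2)) x := by
  have hs := (Real.hasDerivAt_sqrt hx.ne').comp x hφ
  have hden := (hs.const_mul 2).mul hφ
  have hne := (Real.sqrt_pos.2 hx).ne'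
  refine (hφ'.neg.div hden (by simp [hne, hx.ne'])).congr_deriv ?_
  have hsq := Real.sq_sqrt hx.le
  simp only [Function.comp_apply, Pi.mul_apply, Pi.neg_apply]
  field_simp
  rw [hsq]
  ring

lemma tangent_lt_inv_sqrt_neg_deriv {f : ℝ → ℝ} {x₀ : ℝ} (hf : ContDiff ℝ 3 f)
    (hneg : ∀ x ∈ Icc 0 x₀, deriv f x < 0) (hS : ∀ x ∈ Icc 0 x₀, Schwarzian f x < 0)
    {x : ℝ} (hx : x ∈ Ioc 0 x₀) :
    (√(-deriv f 0))⁻¹ + iteratedDeriv 2 f 0 / (2 * √(-deriv f 0) * -deriv f 0) * x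
      < (√(-deriv f x))⁻¹ := by
  have hIcc : Icc 0 x ⊆ Icc 0 x₀ := Icc_subset_Icc_right hx.2
  have hφ : ∀ y, HasDerivAt (fun y => -deriv f y) (-iteratedDeriv 2 f y) y := fun y => by
    have h := hasDerivAt_iteratedDeriv hf (k := 1) (by norm_num) y
    rw [iteratedDeriv_one] at h
    exact h.neg
  have hφ' : ∀ y, HasDerivAt (fun y => -iteratedDeriv 2 f y) (-iteratedDeriv 3 f y) y :=
    fun y => (hasDerivAt_iteratedDeriv hf (k := 2) (by norm_num) y).neg
  have hpos : ∀ y ∈ Icc 0 x, 0 < -deriv f y := fun y hy => neg_pos.2 (hneg y (hIcc hy))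
  -- `(-f')^(-1/2)` is strictly convex: this is what a negative Schwarzian means.
  have h := tangent_lt_of_hasDerivAt2_pos hx.1
    (fun y hy => hasDerivAt_inv_sqrt (hφ y) (hpos y hy))
    (fun y hy => hasDerivAt_deriv_inv_sqrt (hφ y) (hφ' y) (hpos y hy)) fun y hy => by
      have hy := hIcc (Ioo_subset_Icc_self hy)
      have := two_mul_deriv_mul_lt_of_schwarzian_neg (hneg y hy).ne (hS y hy)
      have : 0 < 3 * (-iteratedDeriv 2 f y) ^ 2 - 2 * -deriv f y * -iteratedDeriv 3 f y := by
        linarith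
      have := neg_pos.2 (hneg y hy)
      positivity
  simpa using h

lemma rfun_deriv_lt_deriv {f : ℝ → ℝ} {a b x₀ : ℝ} (hf : ContDiff ℝ 3 f) (hb : 0 < b)
    (hfa : deriv f 0 = a) (hfb : iteratedDeriv 2 f 0 = 2 * b)
    (hneg : ∀ x ∈ Icc 0 x₀, deriv f x < 0) (hS : ∀ x ∈ Icc 0 x₀, Schwarzian f x < 0)
    {x : ℝ} (hx : x ∈ Ioc 0 x₀) :
    a ^ 3 / (a - b * x) ^ 2 < deriv f x := by
  have ha : a < 0 := hfa ▸ hneg 0 ⟨le_rfl, hx.1.le.trans hx.2⟩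
  have htangent := tangent_lt_inv_sqrt_neg_deriv hf hneg hS hx
  rw [hfa, hfb] at htangent
  have hs : 0 < √(-a) := Real.sqrt_pos.2 (neg_pos.2 ha)
  have hsq : √(-a) ^ 2 = -a := Real.sq_sqrt (neg_nonneg.2 ha.le)
  have hbxa : 0 < b * x - a := by nlinarith [hx.1]
  have hden : a - b * x ≠ 0 := by linarith
  set T := (b * x - a) / (-a * √(-a)) with hT_def
  have hT : 0 < T := div_pos hbxa (mul_pos (neg_pos.2 ha) hs)
  have hlt : T < (√(-deriv f x))⁻¹ := by
    convert htangent using 1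
    rw [hT_def]
    field_simp [ha.ne, hs.ne']
    ring
  have hsqrt := (lt_inv_comm₀ hT (Real.sqrt_pos.2 (neg_pos.2 (hneg x ⟨hx.1.le, hx.2⟩)))).1 hlt
  have hTinv : T⁻¹ ^ 2 = -(a ^ 3 / (a - b * x) ^ 2) := by
    rw [hT_def]
    field_simp [ha.ne, hs.ne', hbxa.ne']
    rw [hsq]
    ring
  linarith [(Real.sqrt_lt' (inv_pos.2 hT)).1 hsqrt]

lemma rfun_lt_of_deriv_neg {f : ℝ → ℝ} {a b x₀ : ℝ} (hf : ContDiff ℝ 3 f) (hb : 0 < b)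
    (hf0 : f 0 = 0) (hfa : deriv f 0 = a) (hfb : iteratedDeriv 2 f 0 = 2 * b)
    (hneg : ∀ x ∈ Icc 0 x₀, deriv f x < 0) (hS : ∀ x ∈ Icc 0 x₀, Schwarzian f x < 0)
    {x : ℝ} (hx : x ∈ Ioc 0 x₀) :
    rfun a b x < f x := by
  have ha : a < 0 := hfa ▸ hneg 0 ⟨le_rfl, hx.1.le.trans hx.2⟩
  have := lt_of_hasDerivAt_pos (g := fun y => f y - rfun a b y) hx.1
    (fun y hy => ((hf.differentiable (by norm_num) y).hasDerivAt).sub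
      (hasDerivAt_rfun (rfun_denom_neg ha hb hy.1).ne))
    fun y hy => sub_pos.2 (rfun_deriv_lt_deriv hf hb hfa hfb hneg hS ⟨hy.1, hy.2.le.trans hx.2⟩)
  simpa [hf0] using this

lemma deriv_pos_of_isLocalExtr {f : ℝ → ℝ} {u c : ℝ} (hf : ContDiff ℝ 1 f) (huc : u < c)
    (hbefore : ∀ t ∈ Ioo u c, deriv f t < 0) (hafter : ∀ t ∈ Ioi c, deriv f t ≠ 0)
    (hextr : IsLocalExtr f c) :
    ∀ t ∈ Ioi c, 0 < deriv f t := by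
  have hcont := hf.continuous_deriv le_rfl
  by_contra! h
  obtain ⟨t, ht, ht0⟩ := h
  have hneg := isPreconnected_Ioi.forall_neg_of_ne_zero hcont.continuousOn hafter ht
    (ht0.lt_of_ne (hafter t ht))
  have hanti : StrictAntiOn f (Icc u c ∪ Ici c) :=
    (strictAntiOn_of_deriv_neg (convex_Icc u c) hf.continuous.continuousOn
      (by rwa [interior_Icc])).union
    (strictAntiOn_of_deriv_neg (convex_Ici c) hf.continuous.continuousOn
      (by rwa [interior_Ici])) (isGreatest_Icc huc.le) isLeast_Ici
  exact hanti.not_isLocalExtr (mem_of_superset (Ioi_mem_nhds huc)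
    fun t ht => (le_total t c).imp (fun h => ⟨ht.le, h⟩) id) hextr

lemma rfun_le_of_pos {f : ℝ → ℝ} {a b : ℝ} (hf : ContDiff ℝ 3 f) (ha : a < 0) (hb : 0 < b)
    (hf0 : f 0 = 0) (hfa : deriv f 0 = a) (hfb : iteratedDeriv 2 f 0 = 2 * b)
    (hS : ∀ x, deriv f x ≠ 0 → Schwarzian f x < 0)
    (huniq : ∀ u v, deriv f u = 0 → deriv f v = 0 → u = v)
    (hextr : ∀ u, deriv f u = 0 → IsLocalExtr f u) {x₀ : ℝ} (hx₀ : 0 < x₀) :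
    rfun a b x₀ ≤ f x₀ := by
  have hcont' := hf.continuous_deriv (by norm_num)
  have hcomp : ∀ y, (∀ t ∈ Icc 0 y, deriv f t < 0) → ∀ x ∈ Ioc 0 y, rfun a b x < f x :=
    fun y hy x hx => rfun_lt_of_deriv_neg hf hb hf0 hfa hfb hy (fun t ht => hS t (hy t ht).ne) hx
  by_cases hcrit : ∃ c ∈ Icc 0 x₀, deriv f c = 0
  swap
  · push Not at hcrit
    exact (hcomp x₀ (isPreconnected_Icc.forall_neg_of_ne_zero hcont'.continuousOn hcrit
      (left_mem_Icc.2 hx₀.le) (hfa ▸ ha)) x₀ ⟨hx₀, le_rfl⟩).le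
  obtain ⟨c, hc, hc0⟩ := hcrit
  have hc_pos : 0 < c := hc.1.lt_of_ne (by rintro rfl; exact ha.ne (hfa ▸ hc0))
  have hne : ∀ t ≠ c, deriv f t ≠ 0 := fun t ht h => ht (huniq t c h hc0)
  have hbefore : ∀ t ∈ Ico 0 c, deriv f t < 0 :=
    isPreconnected_Ico.forall_neg_of_ne_zero hcont'.continuousOn
      (fun t ht => hne t ht.2.ne) (left_mem_Ico.2 hc_pos) (hfa ▸ ha)
  have hrc : rfun a b c ≤ f c := by
    refine le_on_closure (s := Ioo 0 c) (fun y hy => (hcomp y (fun t ht => hbefore t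
      ⟨ht.1, ht.2.trans_lt hy.2⟩) y ⟨hy.1, le_rfl⟩).le) ?_ hf.continuous.continuousOn ?_ <;>
      rw [closure_Ioo hc_pos.ne]
    · exact (continuousOn_rfun ha hb).mono Icc_subset_Ici_self
    · exact right_mem_Icc.2 hc_pos.le
  rcases hc.2.eq_or_lt with rfl | hcx
  · exact hrc
  have hafter := deriv_pos_of_isLocalExtr (hf.of_le (by norm_num)) hc_pos
    (fun t ht => hbefore t (Ioo_subset_Ico_self ht)) (fun t ht => hne t ht.ne') (hextr c hc0)
  calc rfun a b x₀ ≤ rfun a b c :=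
        (strictAntiOn_rfun ha hb).antitoneOn hc_pos.le hx₀.le hcx.le
    _ ≤ f c := hrc
    _ ≤ f x₀ := (lt_of_hasDerivAt_pos hcx
        (fun y _ => (hf.differentiable (by norm_num) y).hasDerivAt) fun y hy => hafter y hy.1).le

lemma exists_rfun_lt {f : ℝ → ℝ} {a b : ℝ} (hf : ContDiff ℝ 3 f) (ha : a < 0) (hb : 0 < b)
    (hf0 : f 0 = 0) (hfa : deriv f 0 = a) (hfb : iteratedDeriv 2 f 0 = 2 * b)
    (hS : ∀ x, deriv f x ≠ 0 → Schwarzian f x < 0) :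
    ∃ δ > 0, ∀ x ∈ Ioc 0 δ, rfun a b x < f x := by
  have hev : ∀ᶠ x in 𝓝[≥] 0, deriv f x < 0 := nhdsWithin_le_nhds <|
    (hf.continuous_deriv (by norm_num)).continuousAt.eventually_lt continuousAt_const (hfa ▸ ha)
  obtain ⟨δ, hδ, hneg⟩ := mem_nhdsGE_iff_exists_Icc_subset.1 hev
  exact ⟨δ, hδ, fun x => rfun_lt_of_deriv_neg hf hb hf0 hfa hfb hneg fun t ht => hS t (hneg ht).ne⟩

section comparison

variable {f : ℝ → ℝ} {a b : ℝ}

lemma rfun_le_of_le (ha : a < 0) (hb : 0 < b) (hf_nonneg : ∀ x ≤ 0, 0 ≤ f x)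
    (hf_ge : ∀ x, 0 < x → rfun a b x ≤ f x) {x y : ℝ} (hy : 0 ≤ y) (hxy : x ≤ y) :
    rfun a b y ≤ f x := by
  rcases le_or_gt x 0 with hx | hx
  · exact (rfun_nonpos ha hb hy).trans (hf_nonneg x hx)
  · exact ((strictAntiOn_rfun ha hb).antitoneOn hx.le hy hxy).trans (hf_ge x hx)

lemma integral_rfun_min_lt {w : ℝ → ℝ} {M q δ : ℝ} (ha : a < 0) (hb : 0 < b) (hM : 0 < M)
    (hq : 0 < q) (hδ : 0 < δ) (hf : Continuous f) (hw : ContinuousOn w (Icc 0 1))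
    (hf_nonneg : ∀ x ≤ 0, 0 ≤ f x) (hf_ge : ∀ x, 0 < x → rfun a b x ≤ f x)
    (hf_gt : ∀ x ∈ Ioc 0 δ, rfun a b x < f x) (hwle : ∀ τ ∈ Icc 0 1, w τ ≤ min M (τ * q)) :
    ∫ τ in (0 : ℝ)..1, rfun a b (min M (τ * q)) < ∫ τ in (0 : ℝ)..1, f (w τ) := by
  have hmin : ∀ τ ∈ Icc (0 : ℝ) 1, 0 ≤ min M (τ * q) := fun τ hτ =>
    le_min hM.le (mul_nonneg hτ.1 hq.le)
  refine intervalIntegral.integral_lt_integral_of_continuousOn_of_le_of_exists_lt zero_lt_one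
    ((continuousOn_rfun ha hb).comp (by fun_prop) hmin) (hf.comp_continuousOn hw)
    (fun τ hτ => rfun_le_of_le ha hb hf_nonneg hf_ge (hmin τ (Ioc_subset_Icc_self hτ))
      (hwle τ (Ioc_subset_Icc_self hτ))) ?_
  -- near `τ = 0` the bound `min M (τ * q)` lies in `(0, δ]`, where the comparison is strict
  set τ₀ := min 1 (δ / q)
  have hτ₀ : τ₀ ∈ Icc (0 : ℝ) 1 := ⟨(lt_min one_pos (div_pos hδ hq)).le, min_le_left _ _⟩
  have hpos : 0 < min M (τ₀ * q) := lt_min hM (mul_pos (lt_min one_pos (div_pos hδ hq)) hq)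
  have hle : min M (τ₀ * q) ≤ δ := (min_le_right _ _).trans <|
    (mul_le_mul_of_nonneg_right (min_le_right _ _) hq.le).trans (div_mul_cancel₀ δ hq.ne').le
  refine ⟨τ₀, hτ₀, ?_⟩
  rcases le_or_gt (w τ₀) 0 with hw0 | hw0
  · exact (rfun_neg ha hb hpos).trans_le (hf_nonneg _ hw0)
  · exact ((strictAntiOn_rfun ha hb).antitoneOn hw0.le hpos.le (hwle τ₀ hτ₀)).trans_lt
      (hf_gt _ ⟨hw0, (hwle τ₀ hτ₀).trans hle⟩)

end comparison

lemma apply_neg_le_min_of_hasDerivAt {z F : ℝ → ℝ} {M q : ℝ} (hz : ∀ t, HasDerivAt z (F t) t)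
    (hF : ∀ t, -q ≤ F t) (hz0 : z 0 = 0) (hzM : ∀ t, z t ≤ M) {τ : ℝ} (hτ : 0 ≤ τ) :
    z (-τ) ≤ min M (τ * q) := by
  have hmono : Monotone fun t => z t + q * t :=
    monotone_of_hasDerivAt_nonneg (f' := fun t => F t + q)
      (fun t => by simpa using (hz t).fun_add ((hasDerivAt_id t).const_mul q))
      fun t => show 0 ≤ F t + q by linarith [hF t]
  have := hmono (neg_nonpos.2 hτ)
  simp only [hz0, mul_zero, add_zero] at this
  exact le_min (hzM _) (by linarith)

lemma integral_comp_neg_eq_sub {z g : ℝ → ℝ} (hz : ∀ t, HasDerivAt z (g (t - 1)) t)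
    (hg : Continuous g) :
    ∫ τ in (0 : ℝ)..1, g (-τ) = z 1 - z 0 := by
  rw [← intervalIntegral.integral_eq_sub_of_hasDerivAt (fun t _ => hz t)
    ((hg.comp (continuous_sub_right 1)).intervalIntegrable 0 1)]
  simp

lemma apply_zero_eq_zero_of_isLocalMin {z f : ℝ → ℝ} (hz : ∀ t, HasDerivAt z (f (z (t - 1))) t)
    (hf : ∀ x ≠ 0, x * f x < 0) (hmin : IsLocalMin z 1) :
    z 0 = 0 := by
  have hfz : f (z 0) = 0 := by simpa using hmin.hasDerivAt_eq_zero (hz 1)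
  by_contra h
  exact (hf (z 0) h).ne (by rw [hfz, mul_zero])

theorem min_estimate_entire_solution_general
    (f : ℝ → ℝ) (hf : HypH f) (h2 : 0 < iteratedDeriv 2 f 0)
    (a b : ℝ) (haeq : a = deriv f 0) (hbeq : b = iteratedDeriv 2 f 0 / 2)
    (z : ℝ → ℝ) (hz : ∀ t : ℝ, HasDerivAt z (f (z (t - 1))) t)
    (m M : ℝ) (hM : 0 < M)
    (hbd : ∀ t : ℝ, m ≤ z t ∧ z t ≤ M) (hmin : z 1 = m) :
    m > Dfun a b M ∧ m > rfun a b (-(rfun a b M) / 2) := by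
  obtain ⟨hf3, hfeed, hfa, -, huniq, hextr, hS⟩ := hf
  have ha : a < 0 := haeq ▸ hfa
  have hb : 0 < b := by rw [hbeq]; positivity
  have hfb : iteratedDeriv 2 f 0 = 2 * b := by rw [hbeq]; ring
  have hf0 := map_zero_of_mul_neg hf3.continuous hfeed
  have hf_nonneg : ∀ x ≤ 0, 0 ≤ f x := fun x => nonneg_of_mul_neg hf3.continuous hfeed
  have hf_ge : ∀ x, 0 < x → rfun a b x ≤ f x := fun x =>
    rfun_le_of_pos hf3 ha hb hf0 haeq.symm hfb hS huniq hextr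
  obtain ⟨δ, hδ, hf_gt⟩ := exists_rfun_lt hf3 ha hb hf0 haeq.symm hfb hS
  have hz0 : z 0 = 0 := apply_zero_eq_zero_of_isLocalMin hz hfeed
    (Eventually.of_forall fun t => hmin ▸ (hbd t).1)
  set q := -rfun a b M
  have hq : 0 < q := neg_pos.2 (rfun_neg ha hb hM)
  have hzle : ∀ τ ∈ Icc (0 : ℝ) 1, z (-τ) ≤ min M (τ * q) := fun τ hτ =>
    apply_neg_le_min_of_hasDerivAt hz (fun t => by
      simpa [q] using rfun_le_of_le ha hb hf_nonneg hf_ge hM.le (hbd (t - 1)).2)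
      hz0 (fun t => (hbd t).2) hτ.1
  have hzcont : Continuous z := continuous_iff_continuousAt.2 fun t => (hz t).continuousAt
  have hlt := integral_rfun_min_lt ha hb hM hq hδ hf3.continuous (by fun_prop) hf_nonneg hf_ge
    hf_gt hzle
  rw [integral_comp_neg_eq_sub (g := fun s => f (z s)) hz (by fun_prop), hmin, hz0,
    sub_zero] at hlt
  exact ⟨by rw [Dfun_eq_integral ha hb hM]; exact hlt,
    (rfun_half_le_integral ha hb hM.le hq).trans_lt hlt⟩

/-- Lemma 3.2 (Lemma 44): for an entire solution `z` of `x'(t) = f(x(t-1))`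
bounded between `m < 0 < M` and attaining its minimum `m` at `t = 1`, one has
`m > D(M)` and `m > r(-r(M)/2)`. -/
theorem min_estimate_entire_solution
    (f : ℝ → ℝ) (hf : HypH f) (h2 : 0 < iteratedDeriv 2 f 0)
    (a b : ℝ) (haeq : a = deriv f 0) (hbeq : b = iteratedDeriv 2 f 0 / 2)
    (z : ℝ → ℝ) (hz : ∀ t : ℝ, HasDerivAt z (f (z (t - 1))) t)
    (m M : ℝ) (hm : m < 0) (hM : 0 < M)
    (hbd : ∀ t : ℝ, m ≤ z t ∧ z t ≤ M) (hmin : z 1 = m) :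
    m > Dfun a b M ∧ m > rfun a b (-(rfun a b M) / 2) :=
  min_estimate_entire_solution_general f hf h2 a b haeq hbeq z hz m M hM hbd hmin
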